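/- In each of the three cases, the Q-subalgebra Q[𝓔_1, 𝓔_2, 𝓔_3, X] of Q[[q]] generated by the modified generators 𝓔_1, 𝓔_2, 𝓔_3 and X is closed under the derivation D = q·d/dq. -/

import Mathlib

open PowerSeries Finset

noncomputable section

/-- The truncated harmonic sum `∑_{m=1}^{n} 1/m`. -/
def harm (n : ℕ) : ℚ := ∑ m ∈ Finset.range n, (1 : ℚ) / (m + 1)

/-- The truncated sum `∑_{m=1}^{n} 1/m^2`. -/
def harm2 (n : ℕ) : ℚ := ∑ m ∈ Finset.range n, (1 : ℚ) / ((m : ℚ) + 1) ^ 2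

/-- `c_d = (kd)! / ∏_i (a_i d)!`. -/
def cCoef (a : Fin 5 → ℕ) (k : ℕ) (d : ℕ) : ℚ :=
  (Nat.factorial (k * d) : ℚ) / ∏ i, (Nat.factorial (a i * d) : ℚ)

/-- `s_d = k·∑_{m=1}^{kd} 1/m − ∑_i a_i·∑_{m=1}^{a_i d} 1/m`. -/
def sCoef (a : Fin 5 → ℕ) (k : ℕ) (d : ℕ) : ℚ :=
  (k : ℚ) * harm (k * d) - ∑ i, (a i : ℚ) * harm (a i * d)

/-- `t_d = k²·∑_{m=1}^{kd} 1/m² − ∑_i a_i²·∑_{m=1}^{a_i d} 1/m²`. -/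
def tCoef (a : Fin 5 → ℕ) (k : ℕ) (d : ℕ) : ℚ :=
  (k : ℚ) ^ 2 * harm2 (k * d) - ∑ i, (a i : ℚ) ^ 2 * harm2 (a i * d)

/-- `I_0 = ∑_{d≥0} c_d q^d`. -/
def I₀ (a : Fin 5 → ℕ) (k : ℕ) : ℚ⟦X⟧ := PowerSeries.mk fun d => cCoef a k d

/-- `I_1 = ∑_{d≥1} c_d s_d q^d` (note `s_0 = 0`). -/
def I₁ (a : Fin 5 → ℕ) (k : ℕ) : ℚ⟦X⟧ := PowerSeries.mk fun d => cCoef a k d * sCoef a k d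

/-- `I_2 = ∑_{d≥1} c_d (s_d² − t_d)/2 · q^d`. -/
def I₂ (a : Fin 5 → ℕ) (k : ℕ) : ℚ⟦X⟧ :=
  PowerSeries.mk fun d => cCoef a k d * (sCoef a k d ^ 2 - tCoef a k d) / 2

/-- The derivation `D = q·d/dq` on `ℚ⟦q⟧`. -/
def Dq (f : ℚ⟦X⟧) : ℚ⟦X⟧ := PowerSeries.X * f.derivativeFun

/-- `I_{11} = 1 + D(I_1/I_0)` (the quotient is `I₁ * I₀⁻¹`, with `I₀` a unit). -/
def I₁₁ (a : Fin 5 → ℕ) (k : ℕ) : ℚ⟦X⟧ := 1 + Dq (I₁ a k * (I₀ a k)⁻¹)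

/-- `I_{22} = 1 + D((D(I_2/I_0) + I_1/I_0)/I_{11})`. -/
def I₂₂ (a : Fin 5 → ℕ) (k : ℕ) : ℚ⟦X⟧ :=
  1 + Dq ((Dq (I₂ a k * (I₀ a k)⁻¹) + I₁ a k * (I₀ a k)⁻¹) * (I₁₁ a k)⁻¹)

/-- `r = k^k / ∏_i a_i^{a_i}`. -/
def rConst (a : Fin 5 → ℕ) (k : ℕ) : ℚ := (k : ℚ) ^ k / ∏ i, (a i : ℚ) ^ (a i)

/-- `Y = (1 − rq)⁻¹`. -/
def Yser (a : Fin 5 → ℕ) (k : ℕ) : ℚ⟦X⟧ :=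
  (1 - PowerSeries.C (rConst a k) * PowerSeries.X)⁻¹

/-- `X = 1 − Y`. -/
def Xser (a : Fin 5 → ℕ) (k : ℕ) : ℚ⟦X⟧ := 1 - Yser a k

/-- The generators `A_m = D^m I_{11} / I_{11}`. -/
def Agen (a : Fin 5 → ℕ) (k : ℕ) (m : ℕ) : ℚ⟦X⟧ := Dq^[m] (I₁₁ a k) * (I₁₁ a k)⁻¹

/-- The generators `B_m = D^m I_0 / I_0`. -/
def Bgen (a : Fin 5 → ℕ) (k : ℕ) (m : ℕ) : ℚ⟦X⟧ := Dq^[m] (I₀ a k) * (I₀ a k)⁻¹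

/-- Fixing one of the three cases `Z_6 ⊂ ℙ(1,1,1,1,2)`, `Z_8 ⊂ ℙ(1,1,1,1,4)`,
`Z_10 ⊂ ℙ(1,1,1,2,5)`. -/
def CaseHyp (a : Fin 5 → ℕ) (k : ℕ) : Prop :=
  (a = ![1, 1, 1, 1, 2] ∧ k = 6) ∨ (a = ![1, 1, 1, 1, 4] ∧ k = 8) ∨
    (a = ![1, 1, 1, 2, 5] ∧ k = 10)

/-- The propagator `E_ψ = B₁`. -/
def Eψprop (a : Fin 5 → ℕ) (k : ℕ) : ℚ⟦X⟧ := Bgen a k 1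

/-- The propagator `E_φφ = A₁ + 2B₁`. -/
def Eφφprop (a : Fin 5 → ℕ) (k : ℕ) : ℚ⟦X⟧ := Agen a k 1 + 2 * Bgen a k 1

/-- The propagator `E_φψ = −B₂`. -/
def Eφψprop (a : Fin 5 → ℕ) (k : ℕ) : ℚ⟦X⟧ := -Bgen a k 2

/-- The propagator `E_ψψ = −B₃ + (B₁ − X)B₂ − r₀·B₁·X`. -/
def Eψψprop (a : Fin 5 → ℕ) (k : ℕ) (r₀ : ℚ) : ℚ⟦X⟧ :=
  -Bgen a k 3 + (Bgen a k 1 - Xser a k) * Bgen a k 2 -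
    PowerSeries.C r₀ * Bgen a k 1 * Xser a k

/-- The modified generator `𝓔₁ = E_φφ`. -/
def calE₁ (a : Fin 5 → ℕ) (k : ℕ) : ℚ⟦X⟧ := Eφφprop a k

/-- The modified generator `𝓔₂ = E_ψ·E_φφ + E_φψ`. -/
def calE₂ (a : Fin 5 → ℕ) (k : ℕ) : ℚ⟦X⟧ := Eψprop a k * Eφφprop a k + Eφψprop a k

/-- The modified generator `𝓔₃ = E_ψ²·E_φφ + 2E_ψ·E_φψ + E_ψψ`. -/
def calE₃ (a : Fin 5 → ℕ) (k : ℕ) (r₀ : ℚ) : ℚ⟦X⟧ :=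
  Eψprop a k ^ 2 * Eφφprop a k + 2 * Eψprop a k * Eφψprop a k + Eψψprop a k r₀

/-!
`I₀` is annihilated by the Picard–Fuchs operator `L = θ⁴ − rq·P(θ)`, and `I₁`, the derivative of
the Frobenius solution in its exponent, satisfies `L I₁ + L' I₀ = 0` with `L' = ∂L/∂θ`:
coefficientwise these are the hypergeometric recursion for `c_d` and its logarithmic derivative
`s_{d+1} − s_d = P'(d)/P(d) − 4/(d+1)`. The bilinear concomitant of `L` on `(I₀, I₁)` therefore has
`θ`-derivative zero and no constant term, so it vanishes. Writing `I₁ = t·I₀`, the concomitant is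
`I₀²` times an expression in `I₁₁ = 1 + θt` and its derivatives, and its vanishing expresses `A₂`
through `A₁, B₁, B₂, X`; the Picard–Fuchs equation itself expresses `B₄` through `B₁, B₂, B₃, X`.
With `θB_m = B_{m+1} − B_m B₁`, `θA₁ = A₂ − A₁²` and `θX = X − X²` this gives
`θ𝓔₁ = 2𝓔₂ − 𝓔₁² − X𝓔₁ − r₀X`, `θ𝓔₂ = 𝓔₃ − 𝓔₁𝓔₂ − X𝓔₂` and `θ𝓔₃ = σ₄X − 𝓔₂² − X𝓔₃`,
where `σ₄ = P(0)`.
-/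

theorem Derivation.map_ofNat {R A : Type*} [CommSemiring R] [CommSemiring A] [Algebra R A]
    (D : Derivation R A A) (n : ℕ) [n.AtLeastTwo] : D (no_index (OfNat.ofNat n) : A) = 0 := by
  rw [← Nat.cast_ofNat, D.map_natCast]

theorem Derivation.map_mem_adjoin {R A : Type*} [CommSemiring R] [CommSemiring A] [Algebra R A]
    (D : Derivation R A A) {s : Set A} (hs : ∀ a ∈ s, D a ∈ Algebra.adjoin R s) :
    ∀ a ∈ Algebra.adjoin R s, D a ∈ Algebra.adjoin R s := by
  intro a ha
  induction ha using Algebra.adjoin_induction with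
  | mem a ha => exact hs a ha
  | algebraMap r => simp
  | add a b _ _ ha hb => simpa using add_mem ha hb
  | mul a b ha hb ha' hb' => simpa using add_mem (mul_mem ha hb') (mul_mem hb ha')

theorem Derivation.map_mem_adjoin_propagators {R : Type*} [CommRing R] [Algebra ℚ R]
    (δ : Derivation ℚ R R) (r₀ σ₄ : ℚ) {A B₁ B₂ B₃ X E₁ E₂ E₃ : R}
    (hB₁ : δ B₁ = B₂ - B₁ * B₁) (hB₂ : δ B₂ = B₃ - B₂ * B₁)
    (hB₃ : δ B₃ = -(X * (2 * B₃ + algebraMap ℚ R (r₀ + 1) * B₂ + algebraMap ℚ R r₀ * B₁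
      + algebraMap ℚ R σ₄)) - B₃ * B₁)
    (hA : δ A = 2 * B₁ ^ 2 - 4 * B₂ - 2 * A * B₁ - X * A - 2 * X * B₁
      - algebraMap ℚ R r₀ * X - A * A)
    (hX : δ X = X - X * X)
    (hE₁ : E₁ = A + 2 * B₁) (hE₂ : E₂ = B₁ * E₁ - B₂)
    (hE₃ : E₃ = B₁ ^ 2 * E₁ - 2 * B₁ * B₂ - B₃ + (B₁ - X) * B₂ - algebraMap ℚ R r₀ * B₁ * X) :
    ∀ f ∈ Algebra.adjoin ℚ {E₁, E₂, E₃, X}, δ f ∈ Algebra.adjoin ℚ {E₁, E₂, E₃, X} := by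
  have hδE₁ : δ E₁ = 2 * E₂ - E₁ * E₁ - X * E₁ - algebraMap ℚ R r₀ * X := by
    rw [hE₂, hE₁]
    simp only [map_add, Derivation.leibniz, Derivation.map_ofNat, smul_eq_mul, hA, hB₁]
    ring
  have hδE₂ : δ E₂ = E₃ - E₁ * E₂ - X * E₂ := by
    rw [hE₃, hE₂, hE₁]
    simp only [map_add, map_sub, Derivation.leibniz, Derivation.map_ofNat, smul_eq_mul, hA, hB₁,
      hB₂]
    ring
  have hδE₃ : δ E₃ = algebraMap ℚ R σ₄ * X - E₂ * E₂ - X * E₃ := by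
    rw [hE₃, hE₂, hE₁]
    simp only [map_add, map_sub, map_one, Derivation.leibniz, Derivation.leibniz_pow,
      Derivation.map_algebraMap, Derivation.map_ofNat, smul_eq_mul, hA, hB₁, hB₂, hB₃, hX]
    ring
  set S := Algebra.adjoin ℚ ({E₁, E₂, E₃, X} : Set R)
  have h₁ : E₁ ∈ S := Algebra.subset_adjoin (by simp)
  have h₂ : E₂ ∈ S := Algebra.subset_adjoin (by simp)
  have h₃ : E₃ ∈ S := Algebra.subset_adjoin (by simp)
  have hX' : X ∈ S := Algebra.subset_adjoin (by simp)
  refine δ.map_mem_adjoin ?_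
  rintro a (rfl | rfl | rfl | rfl)
  · rw [hδE₁]
    exact sub_mem (sub_mem (sub_mem (mul_mem (ofNat_mem S 2) h₂) (mul_mem h₁ h₁))
      (mul_mem hX' h₁)) (mul_mem (S.algebraMap_mem r₀) hX')
  · rw [hδE₂]
    exact sub_mem (sub_mem h₃ (mul_mem h₁ h₂)) (mul_mem hX' h₂)
  · rw [hδE₃]
    exact sub_mem (sub_mem (mul_mem (S.algebraMap_mem σ₄) hX') (mul_mem h₂ h₂)) (mul_mem hX' h₃)
  · rw [hX]
    exact sub_mem hX' (mul_mem hX' hX')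

def theta : Derivation ℚ ℚ⟦X⟧ ℚ⟦X⟧ := (X : ℚ⟦X⟧) • derivative ℚ

theorem coe_theta : ⇑theta = Dq := funext fun _ => rfl

theorem Dq_add (f g : ℚ⟦X⟧) : Dq (f + g) = Dq f + Dq g := map_add theta f g

theorem Dq_sub (f g : ℚ⟦X⟧) : Dq (f - g) = Dq f - Dq g := map_sub theta f g

theorem Dq_mul (f g : ℚ⟦X⟧) : Dq (f * g) = f * Dq g + g * Dq f := by
  simp [← coe_theta, Derivation.leibniz]

theorem Dq_C (r : ℚ) : Dq (C r) = 0 := theta.map_algebraMap r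

theorem Dq_zero : Dq 0 = 0 := map_zero theta

theorem Dq_one : Dq 1 = 0 := theta.map_one_eq_zero

theorem Dq_inv {f : ℚ⟦X⟧} (hf : constantCoeff f ≠ 0) : Dq f⁻¹ = -f⁻¹ ^ 2 * Dq f := by
  rw [← coe_theta, theta.leibniz_of_mul_eq_one (PowerSeries.inv_mul_cancel _ hf), smul_eq_mul]

theorem coeff_Dq (n : ℕ) (f : ℚ⟦X⟧) : coeff n (Dq f) = n * coeff n f := by
  cases n with
  | zero => simp [Dq]
  | succ n =>
    simp only [← coe_theta, theta, Derivation.coe_smul, Pi.smul_apply, smul_eq_mul,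
      coeff_succ_X_mul, coeff_derivative, Nat.cast_add, Nat.cast_one]
    ring

theorem coeff_Dq_iterate (m n : ℕ) (f : ℚ⟦X⟧) : coeff n (Dq^[m] f) = (n : ℚ) ^ m * coeff n f := by
  induction m with
  | zero => simp
  | succ m ih => rw [Function.iterate_succ_apply', coeff_Dq, ih]; ring

theorem constantCoeff_Dq (f : ℚ⟦X⟧) : constantCoeff (Dq f) = 0 := by
  simpa using coeff_Dq 0 f

theorem eq_zero_of_Dq_eq_zero {f : ℚ⟦X⟧} (h : Dq f = 0) (h₀ : constantCoeff f = 0) : f = 0 := by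
  ext (_ | n)
  · simpa using h₀
  · simpa [coeff_Dq, Nat.cast_add_one_ne_zero] using congrArg (coeff (n + 1)) h

theorem Dq_C_mul_X (ρ : ℚ) : Dq (C ρ * X) = C ρ * X := by
  ext (_ | _ | n) <;> simp [coeff_Dq, coeff_X, coeff_C]

theorem Dq_X : Dq X = X := by simpa using Dq_C_mul_X 1

theorem ne_zero_of_constantCoeff_ne_zero {f : ℚ⟦X⟧} (hf : constantCoeff f ≠ 0) : f ≠ 0 :=
  fun h => hf (by rw [h, map_zero])

def derivRatio (m : ℕ) (f : ℚ⟦X⟧) : ℚ⟦X⟧ := Dq^[m] f * f⁻¹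

def mirrorDeriv (x y : ℚ⟦X⟧) : ℚ⟦X⟧ := 1 + Dq (y * x⁻¹)

def conifoldX (ρ : ℚ) : ℚ⟦X⟧ := 1 - (1 - C ρ * X)⁻¹

theorem Dq_iterate_eq_derivRatio_mul {f : ℚ⟦X⟧} (hf : constantCoeff f ≠ 0) (m : ℕ) :
    Dq^[m] f = derivRatio m f * f := by
  rw [derivRatio, mul_assoc, PowerSeries.inv_mul_cancel _ hf, mul_one]

theorem Dq_eq_derivRatio_mul {f : ℚ⟦X⟧} (hf : constantCoeff f ≠ 0) :
    Dq f = derivRatio 1 f * f :=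
  Dq_iterate_eq_derivRatio_mul hf 1

theorem Dq_derivRatio {f : ℚ⟦X⟧} (hf : constantCoeff f ≠ 0) (m : ℕ) :
    Dq (derivRatio m f) = derivRatio (m + 1) f - derivRatio m f * derivRatio 1 f := by
  simp only [derivRatio, Dq_mul, Dq_inv hf, Function.iterate_succ_apply', Function.iterate_zero,
    id]
  ring

theorem constantCoeff_mirrorDeriv (x y : ℚ⟦X⟧) : constantCoeff (mirrorDeriv x y) = 1 := by
  simp [mirrorDeriv, constantCoeff_Dq]

theorem conifoldX_mul_one_sub (ρ : ℚ) : conifoldX ρ * (1 - C ρ * X) = -(C ρ * X) := by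
  rw [conifoldX, sub_mul, PowerSeries.inv_mul_cancel _ (by simp)]
  ring

theorem Dq_conifoldX (ρ : ℚ) : Dq (conifoldX ρ) = conifoldX ρ - conifoldX ρ * conifoldX ρ := by
  have hu : constantCoeff (1 - C ρ * X : ℚ⟦X⟧) ≠ 0 := by simp
  rw [conifoldX, Dq_sub, Dq_one, Dq_inv hu, Dq_sub, Dq_one, Dq_C_mul_X]
  linear_combination (1 - C ρ * X)⁻¹ * (PowerSeries.inv_mul_cancel _ hu)

def pfPoly (r₀ σ₄ t : ℚ) : ℚ := t ^ 4 + 2 * t ^ 3 + (r₀ + 1) * t ^ 2 + r₀ * t + σ₄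

def pfPolyDeriv (r₀ t : ℚ) : ℚ := 4 * t ^ 3 + 6 * t ^ 2 + 2 * (r₀ + 1) * t + r₀

def pfOp (ρ r₀ σ₄ : ℚ) (f : ℚ⟦X⟧) : ℚ⟦X⟧ :=
  Dq^[4] f - C ρ * X * (Dq^[4] f + C 2 * Dq^[3] f + C (r₀ + 1) * Dq^[2] f + C r₀ * Dq^[1] f
    + C σ₄ * f)

def pfOpDeriv (ρ r₀ : ℚ) (f : ℚ⟦X⟧) : ℚ⟦X⟧ :=
  C 4 * Dq^[3] f - C ρ * X * (C 4 * Dq^[3] f + C 6 * Dq^[2] f + C (2 * (r₀ + 1)) * Dq^[1] f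
    + C r₀ * f)

theorem coeff_succ_C_mul_X_mul (ρ : ℚ) (n : ℕ) (f : ℚ⟦X⟧) :
    coeff (n + 1) (C ρ * X * f) = ρ * coeff n f := by
  rw [mul_assoc, coeff_C_mul, coeff_succ_X_mul]

theorem coeff_succ_pfOp (ρ r₀ σ₄ : ℚ) (n : ℕ) (f : ℚ⟦X⟧) :
    coeff (n + 1) (pfOp ρ r₀ σ₄ f)
      = ((n : ℚ) + 1) ^ 4 * coeff (n + 1) f - ρ * pfPoly r₀ σ₄ n * coeff n f := by
  simp only [pfOp, map_sub, coeff_succ_C_mul_X_mul, map_add, coeff_C_mul, coeff_Dq_iterate,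
    pfPoly, Nat.cast_add_one, add_mul]
  ring

theorem coeff_succ_pfOpDeriv (ρ r₀ : ℚ) (n : ℕ) (f : ℚ⟦X⟧) :
    coeff (n + 1) (pfOpDeriv ρ r₀ f)
      = 4 * ((n : ℚ) + 1) ^ 3 * coeff (n + 1) f - ρ * pfPolyDeriv r₀ n * coeff n f := by
  simp only [pfOpDeriv, map_sub, coeff_succ_C_mul_X_mul, map_add, coeff_C_mul, coeff_Dq_iterate,
    pfPolyDeriv, Nat.cast_add_one]
  ring

theorem pfOp_eq_zero {ρ r₀ σ₄ : ℚ} {f : ℚ⟦X⟧}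
    (h : ∀ n : ℕ, ((n : ℚ) + 1) ^ 4 * coeff (n + 1) f = ρ * pfPoly r₀ σ₄ n * coeff n f) :
    pfOp ρ r₀ σ₄ f = 0 := by
  ext (_ | n)
  · simp [pfOp, constantCoeff_Dq]
  · rw [coeff_succ_pfOp, h, sub_self, map_zero]

theorem pfOp_add_pfOpDeriv_eq_zero {ρ r₀ σ₄ : ℚ} {f g : ℚ⟦X⟧}
    (h : ∀ n : ℕ, ((n : ℚ) + 1) ^ 4 * coeff (n + 1) g + 4 * ((n : ℚ) + 1) ^ 3 * coeff (n + 1) f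
      = ρ * (pfPoly r₀ σ₄ n * coeff n g + pfPolyDeriv r₀ n * coeff n f)) :
    pfOp ρ r₀ σ₄ g + pfOpDeriv ρ r₀ f = 0 := by
  ext (_ | n)
  · simp [pfOp, pfOpDeriv, constantCoeff_Dq]
  · rw [map_add, coeff_succ_pfOp, coeff_succ_pfOpDeriv, map_zero]
    linear_combination h n

theorem derivRatio_four_of_pfOp {ρ r₀ σ₄ : ℚ} {x : ℚ⟦X⟧} (hx : constantCoeff x ≠ 0)
    (h : pfOp ρ r₀ σ₄ x = 0) :
    derivRatio 4 x = -(conifoldX ρ * (2 * derivRatio 3 x + C (r₀ + 1) * derivRatio 2 x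
      + C r₀ * derivRatio 1 x + C σ₄)) := by
  rw [pfOp, Dq_iterate_eq_derivRatio_mul hx 4, Dq_iterate_eq_derivRatio_mul hx 3,
    Dq_iterate_eq_derivRatio_mul hx 2, Dq_iterate_eq_derivRatio_mul hx 1, map_ofNat] at h
  have hfactor : x * ((1 - C ρ * X) * (derivRatio 4 x + conifoldX ρ * (2 * derivRatio 3 x
      + C (r₀ + 1) * derivRatio 2 x + C r₀ * derivRatio 1 x + C σ₄))) = 0 := by
    linear_combination h + x * (2 * derivRatio 3 x + C (r₀ + 1) * derivRatio 2 x
      + C r₀ * derivRatio 1 x + C σ₄) * conifoldX_mul_one_sub ρ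
  have h₁ : (1 - C ρ * X : ℚ⟦X⟧) ≠ 0 := ne_zero_of_constantCoeff_ne_zero (by simp)
  simpa [add_eq_zero_iff_eq_neg, ne_zero_of_constantCoeff_ne_zero hx, h₁] using hfactor

def wronskian (i j : ℕ) (x y : ℚ⟦X⟧) : ℚ⟦X⟧ := Dq^[i] x * Dq^[j] y - Dq^[j] x * Dq^[i] y

def concomitant (ρ r₀ : ℚ) (x y : ℚ⟦X⟧) : ℚ⟦X⟧ :=
  C ρ * X * (C r₀ * wronskian 0 1 x y + wronskian 0 2 x y + C r₀ * x ^ 2 + C 2 * x * Dq x)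
    - (1 - C ρ * X) * (wronskian 0 3 x y - wronskian 1 2 x y + C 4 * x * Dq^[2] x
      - C 2 * Dq x ^ 2)

theorem Dq_concomitant (ρ r₀ σ₄ : ℚ) (x y : ℚ⟦X⟧) :
    Dq (concomitant ρ r₀ x y) = y * pfOp ρ r₀ σ₄ x - x * (pfOp ρ r₀ σ₄ y + pfOpDeriv ρ r₀ x) := by
  simp only [concomitant, wronskian, pfOp, pfOpDeriv, Dq_add, Dq_sub, Dq_mul, Dq_C, Dq_X,
    Dq_one, Function.iterate_succ_apply', Function.iterate_zero, id, pow_two]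
  simp only [map_ofNat, map_add, map_mul, map_one]
  ring

theorem concomitant_eq_zero {ρ r₀ σ₄ : ℚ} {x y : ℚ⟦X⟧} (hx : pfOp ρ r₀ σ₄ x = 0)
    (hy : pfOp ρ r₀ σ₄ y + pfOpDeriv ρ r₀ x = 0) : concomitant ρ r₀ x y = 0 := by
  refine eq_zero_of_Dq_eq_zero ?_ ?_
  · rw [Dq_concomitant ρ r₀ σ₄, hx, hy]; ring
  · simp [concomitant, wronskian, constantCoeff_Dq]

theorem concomitant_mul_right (ρ r₀ : ℚ) (x t : ℚ⟦X⟧) :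
    concomitant ρ r₀ x (t * x) =
      C ρ * X * (C r₀ * x ^ 2 * (1 + Dq t) + x ^ 2 * Dq (1 + Dq t) + 2 * x * Dq x * (1 + Dq t))
      - (1 - C ρ * X) * (x ^ 2 * Dq^[2] (1 + Dq t) + 2 * x * Dq x * Dq (1 + Dq t)
        + 4 * x * Dq^[2] x * (1 + Dq t) - 2 * Dq x ^ 2 * (1 + Dq t)) := by
  simp only [concomitant, wronskian, Dq_add, Dq_mul, Dq_zero, Dq_one,
    Function.iterate_succ_apply', Function.iterate_zero, id, pow_two]
  simp only [map_ofNat]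
  ring

theorem derivRatio_two_mirrorDeriv {ρ r₀ : ℚ} {x y : ℚ⟦X⟧} (hx : constantCoeff x ≠ 0)
    (h : concomitant ρ r₀ x y = 0) :
    derivRatio 2 (mirrorDeriv x y) = 2 * derivRatio 1 x ^ 2 - 4 * derivRatio 2 x
      - 2 * derivRatio 1 (mirrorDeriv x y) * derivRatio 1 x
      - conifoldX ρ * derivRatio 1 (mirrorDeriv x y) - 2 * conifoldX ρ * derivRatio 1 x
      - C r₀ * conifoldX ρ := by
  set J := mirrorDeriv x y
  have hJ : constantCoeff J ≠ 0 := by simp [J, constantCoeff_mirrorDeriv]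
  have hy : y = y * x⁻¹ * x := by rw [mul_assoc, PowerSeries.inv_mul_cancel _ hx, mul_one]
  rw [hy, concomitant_mul_right, show 1 + Dq (y * x⁻¹) = J from rfl,
    Dq_iterate_eq_derivRatio_mul hx 2, Dq_iterate_eq_derivRatio_mul hJ 2, Dq_eq_derivRatio_mul hx,
    Dq_eq_derivRatio_mul hJ] at h
  have hfactor : x ^ 2 * J * ((1 - C ρ * X) * (derivRatio 2 J - (2 * derivRatio 1 x ^ 2
      - 4 * derivRatio 2 x - 2 * derivRatio 1 J * derivRatio 1 x - conifoldX ρ * derivRatio 1 J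
      - 2 * conifoldX ρ * derivRatio 1 x - C r₀ * conifoldX ρ))) = 0 := by
    linear_combination -h + x ^ 2 * J * (derivRatio 1 J + 2 * derivRatio 1 x + C r₀)
      * conifoldX_mul_one_sub ρ
  have h₁ : (1 - C ρ * X : ℚ⟦X⟧) ≠ 0 := ne_zero_of_constantCoeff_ne_zero (by simp)
  simpa [sub_eq_zero, ne_zero_of_constantCoeff_ne_zero hx, ne_zero_of_constantCoeff_ne_zero hJ,
    h₁] using hfactor

theorem cCoef_succ_mul (a : Fin 5 → ℕ) (k d : ℕ) :
    cCoef a k (d + 1) * ∏ i, ((a i * d + 1).ascFactorial (a i) : ℚ)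
      = cCoef a k d * (k * d + 1).ascFactorial k := by
  have hfac (m : ℕ) :
      ((m * (d + 1)).factorial : ℚ) = (m * d).factorial * (m * d + 1).ascFactorial m := by
    rw [mul_add_one, ← Nat.factorial_mul_ascFactorial, Nat.cast_mul]
  have hne (m : ℕ) : ((m * d).factorial : ℚ) ≠ 0 := by positivity
  simp only [cCoef, hfac, Finset.prod_mul_distrib]
  field_simp

theorem harm_add (m n : ℕ) :
    harm (m + n) = harm m + ∑ j ∈ Finset.range n, 1 / ((m : ℚ) + j + 1) := by
  simp [harm, Finset.sum_range_add, add_assoc]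

theorem sCoef_succ_sub (a : Fin 5 → ℕ) (k d : ℕ) :
    sCoef a k (d + 1) - sCoef a k d
      = k * ∑ j ∈ Finset.range k, 1 / ((k * d : ℕ) + (j : ℚ) + 1)
        - ∑ i, (a i : ℚ) * ∑ j ∈ Finset.range (a i), 1 / ((a i * d : ℕ) + (j : ℚ) + 1) := by
  simp only [sCoef, Nat.mul_add_one]
  simp only [harm_add, mul_add, Finset.sum_add_distrib]
  ring

theorem cCoef_recursion {a : Fin 5 → ℕ} {k : ℕ} {r₀ σ₄ : ℚ}
    (h : ∀ d : ℕ, ((d : ℚ) + 1) ^ 4 * (k * d + 1).ascFactorial k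
      = rConst a k * pfPoly r₀ σ₄ d * ∏ i, ((a i * d + 1).ascFactorial (a i) : ℚ)) (d : ℕ) :
    ((d : ℚ) + 1) ^ 4 * cCoef a k (d + 1) = rConst a k * pfPoly r₀ σ₄ d * cCoef a k d := by
  have hne : ∏ i, ((a i * d + 1).ascFactorial (a i) : ℚ) ≠ 0 :=
    Finset.prod_ne_zero_iff.mpr fun i _ => by positivity
  apply mul_right_cancel₀ hne
  linear_combination ((d : ℚ) + 1) ^ 4 * cCoef_succ_mul a k d + cCoef a k d * h d

theorem cCoef_mul_sCoef_recursion {a : Fin 5 → ℕ} {k : ℕ} {r₀ σ₄ : ℚ}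
    (hc : ∀ d : ℕ, ((d : ℚ) + 1) ^ 4 * cCoef a k (d + 1)
      = rConst a k * pfPoly r₀ σ₄ d * cCoef a k d)
    (hs : ∀ d : ℕ, ((d : ℚ) + 1) * pfPoly r₀ σ₄ d * (sCoef a k (d + 1) - sCoef a k d)
      + 4 * pfPoly r₀ σ₄ d = ((d : ℚ) + 1) * pfPolyDeriv r₀ d) (d : ℕ) :
    ((d : ℚ) + 1) ^ 4 * (cCoef a k (d + 1) * sCoef a k (d + 1))
        + 4 * ((d : ℚ) + 1) ^ 3 * cCoef a k (d + 1)
      = rConst a k * (pfPoly r₀ σ₄ d * (cCoef a k d * sCoef a k d)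
        + pfPolyDeriv r₀ d * cCoef a k d) := by
  apply mul_left_cancel₀ (Nat.cast_add_one_ne_zero d)
  linear_combination (((d : ℚ) + 1) * sCoef a k (d + 1) + 4) * hc d
    + rConst a k * cCoef a k d * hs d

theorem Dq_mem_adjoin_of_identities (a : Fin 5 → ℕ) (k : ℕ) (r₀ σ₄ : ℚ)
    (hprod : ∀ d : ℕ, ((d : ℚ) + 1) ^ 4 * (k * d + 1).ascFactorial k
      = rConst a k * pfPoly r₀ σ₄ d * ∏ i, ((a i * d + 1).ascFactorial (a i) : ℚ))
    (hharm : ∀ d : ℕ, ((d : ℚ) + 1) * pfPoly r₀ σ₄ d * (sCoef a k (d + 1) - sCoef a k d)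
      + 4 * pfPoly r₀ σ₄ d = ((d : ℚ) + 1) * pfPolyDeriv r₀ d) :
    ∀ f ∈ Algebra.adjoin ℚ ({calE₁ a k, calE₂ a k, calE₃ a k r₀, Xser a k} : Set ℚ⟦X⟧),
      Dq f ∈ Algebra.adjoin ℚ ({calE₁ a k, calE₂ a k, calE₃ a k r₀, Xser a k} : Set ℚ⟦X⟧) := by
  have hc := cCoef_recursion hprod
  set x := I₀ a k
  set J := mirrorDeriv x (I₁ a k)
  have hx : constantCoeff x ≠ 0 := by simp [x, I₀, cCoef, ← coeff_zero_eq_constantCoeff_apply]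
  have hJ : constantCoeff J ≠ 0 := by simp [J, constantCoeff_mirrorDeriv]
  have hpf₀ : pfOp (rConst a k) r₀ σ₄ x = 0 := pfOp_eq_zero (by simpa [x, I₀] using hc)
  have hpf₁ : pfOp (rConst a k) r₀ σ₄ (I₁ a k) + pfOpDeriv (rConst a k) r₀ x = 0 :=
    pfOp_add_pfOpDeriv_eq_zero (by simpa [x, I₀, I₁] using cCoef_mul_sCoef_recursion hc hharm)
  rw [← coe_theta]
  refine theta.map_mem_adjoin_propagators r₀ σ₄ (A := derivRatio 1 J) (B₁ := derivRatio 1 x)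
    (B₂ := derivRatio 2 x) (B₃ := derivRatio 3 x) (X := conifoldX (rConst a k))
    (Dq_derivRatio hx 1) (Dq_derivRatio hx 2) ?_ ?_ (Dq_conifoldX _) rfl ?_ ?_
  · exact (Dq_derivRatio hx 3).trans (by rw [derivRatio_four_of_pfOp hx hpf₀]; rfl)
  · exact (Dq_derivRatio hJ 1).trans
      (by rw [derivRatio_two_mirrorDeriv hx (concomitant_eq_zero hpf₀ hpf₁)]; rfl)
  · exact (sub_eq_add_neg _ _).symm
  · simp only [calE₃, Eψψprop, Eψprop, Eφψprop, Eφφprop, calE₁, Bgen, Agen, Xser, Yser,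
      derivRatio, conifoldX, x, PowerSeries.algebraMap_eq]
    ring

/-- the subalgebra `ℚ[𝓔₁, 𝓔₂, 𝓔₃, X]` of `ℚ⟦q⟧` is closed under the
derivation `D = q·d/dq`. -/
theorem statement_14 (a : Fin 5 → ℕ) (k : ℕ) (r₀ : ℚ)
    (h : (a = ![1, 1, 1, 1, 2] ∧ k = 6 ∧ r₀ = 13 / 36) ∨
         (a = ![1, 1, 1, 1, 4] ∧ k = 8 ∧ r₀ = 11 / 32) ∨
         (a = ![1, 1, 1, 2, 5] ∧ k = 10 ∧ r₀ = 3 / 10)) :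
    ∀ f ∈ Algebra.adjoin ℚ
        ({calE₁ a k, calE₂ a k, calE₃ a k r₀, Xser a k} : Set ℚ⟦X⟧),
      Dq f ∈ Algebra.adjoin ℚ
        ({calE₁ a k, calE₂ a k, calE₃ a k r₀, Xser a k} : Set ℚ⟦X⟧) := by
  -- `P(θ) = ∏ (θ + α)` over `α = 1/6, 1/3, 2/3, 5/6`, resp. `1/8, 3/8, 5/8, 7/8`,
  -- resp. `1/10, 3/10, 7/10, 9/10`, so `σ₄ = P(0)` is the product of the `α`.
  rcases h with ⟨rfl, rfl, rfl⟩ | ⟨rfl, rfl, rfl⟩ | ⟨rfl, rfl, rfl⟩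
  on_goal 3 => refine Dq_mem_adjoin_of_identities _ _ _ (189 / 10000) (fun d => ?_) (fun d => ?_)
  on_goal 2 => refine Dq_mem_adjoin_of_identities _ _ _ (105 / 4096) (fun d => ?_) (fun d => ?_)
  on_goal 1 => refine Dq_mem_adjoin_of_identities _ _ _ (5 / 162) (fun d => ?_) (fun d => ?_)
  all_goals first
    | rw [sCoef_succ_sub]
      simp only [pfPoly, pfPolyDeriv, Fin.sum_univ_five, sum_range_succ, range_one, sum_singleton,
        Fin.isValue, Matrix.cons_val_zero, Matrix.cons_val_one, Matrix.cons_val, one_mul,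
        one_div, Nat.cast_ofNat, Nat.cast_mul, Nat.cast_one, CharP.cast_eq_zero, add_zero]
      field_simp
      ring
    | simp only [Nat.ascFactorial_eq_prod_range, prod_range_succ, range_one, prod_singleton, rConst,
        pfPoly, Fin.prod_univ_five, Fin.isValue, Matrix.cons_val_zero, Matrix.cons_val_one,
        Matrix.cons_val, one_pow, one_mul, mul_one, add_zero, Nat.cast_prod, Nat.cast_mul,
        Nat.cast_add, Nat.cast_ofNat, Nat.cast_one, CharP.cast_eq_zero]
      ring
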